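/- Let f : F^n → F be in layered canalizing form with r layers of sizes k_1, …, k_r and canalizing input sets S_{i,j}, and let x_s be the s-th variable of the ℓ-th layer (1 ≤ ℓ ≤ r) with canalizing input set S_{ℓ,s} satisfying 0 ∉ S_{ℓ,s}. Then the number of transitions changed by deleting x_s satisfies #{x ∈ F^n : f(x_1, …, x_{s−1}, 0, x_{s+1}, …, x_n) ≠ f(x)} ≤ p^{n − (k_1 + ⋯ + k_ℓ)} · (∏_{i=1}^{ℓ−1} ∏_{j=1}^{k_i} (p − |S_{i,j}|)) · (∏_{j=1, j ≠ s}^{k_ℓ} (p − |S_{ℓ,j}|)) · |S_{ℓ,s}|. -/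

import Mathlib

open Finset

/-- Indicator function of the complement of `S`: `Qt S x = 1` if `x ∉ S`, `0` if `x ∈ S`. -/
def Qt {F : Type*} [Fintype F] [DecidableEq F] [Zero F] [One F] (S : Finset F) (x : F) : F :=
  if x ∈ S then 0 else 1

/-- `g` actually depends on (is essential in) its `i`-th variable. -/
def FnDependsOn {F : Type*} (n : ℕ) (g : (Fin n → F) → F) (i : Fin n) : Prop :=
  ∃ x y : Fin n → F, (∀ j, j ≠ i → x j = y j) ∧ g x ≠ g y

/-- `g` is canalizing in its `i`-th variable with canalizing input set `S`
(a nonempty proper subset of `F`) and canalizing output `b`. -/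
def Canalizing {F : Type*} [Fintype F] [DecidableEq F] (n : ℕ) (g : (Fin n → F) → F)
    (i : Fin n) (S : Finset F) (b : F) : Prop :=
  S.Nonempty ∧ S ≠ Finset.univ ∧ ∀ x : Fin n → F, x i ∈ S → g x = b

/-- `f` is 1-canalizing in its `i`-th variable with canalizing input set `S`
(a nonempty proper subset of `F`) and canalizing output `b`: `f = b` whenever `x i ∈ S`,
and on `x i ∉ S` the value of `f` is given by a single function of the remaining variables
which is not identically `b`. -/
def OneCanalizing {F : Type*} [Fintype F] [DecidableEq F] (n : ℕ) (f : (Fin n → F) → F)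
    (i : Fin n) (S : Finset F) (b : F) : Prop :=
  S.Nonempty ∧ S ≠ Finset.univ ∧
  (∀ x : Fin n → F, x i ∈ S → f x = b) ∧
  (∀ x y : Fin n → F, x i ∉ S → y i ∉ S → (∀ j, j ≠ i → x j = y j) → f x = f y) ∧
  (∃ x : Fin n → F, x i ∉ S ∧ f x ≠ b)

/-- Nested evaluation `M₁(M₂(⋯(M_r · P + B_r)⋯) + B₂) + B₁`. -/
def nestEval {F : Type*} [Mul F] [Add F] : List (F × F) → F → F
  | [], P => P
  | (m, b) :: t, P => m * nestEval t P + b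

/-- Layered canalizing form data for a function of `n` variables with `r ≥ 1` layers:
pairwise disjoint layer blocks, nonempty proper canalizing input sets for the
layer variables, layer constants `B` with the last one nonzero, and a core function
`P_C` of the remaining variables having no 1-canalizing variables. -/
structure LayeredForm (F : Type*) [Field F] [Fintype F] [DecidableEq F] (n r : ℕ) where
  hr : 0 < r
  layer : Fin r → Finset (Fin n)
  disj : ∀ i j : Fin r, i ≠ j → Disjoint (layer i) (layer j)
  S : Fin n → Finset F
  Sne : ∀ i : Fin r, ∀ v ∈ layer i, (S v).Nonempty
  Spr : ∀ i : Fin r, ∀ v ∈ layer i, S v ≠ Finset.univ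
  B : Fin r → F
  Blast : B ⟨r - 1, Nat.sub_lt hr Nat.one_pos⟩ ≠ 0
  PC : (Fin n → F) → F
  PCvars : ∀ i : Fin r, ∀ v ∈ layer i, ¬ FnDependsOn n PC v
  PCnc : ¬ ∃ (v : Fin n) (S' : Finset F) (b : F), OneCanalizing n PC v S' b

/-- The product `M_i = ∏_{v ∈ L_i} Q̃_{S_v}(x_v)` over the `i`-th layer. -/
def LayeredForm.M {F : Type*} [Field F] [Fintype F] [DecidableEq F] {n r : ℕ}
    (L : LayeredForm F n r) (i : Fin r) (x : Fin n → F) : F :=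
  ∏ v ∈ L.layer i, Qt (L.S v) (x v)

/-- The function determined by a layered canalizing form:
`f(x) = M₁(M₂(⋯(M_r · P_C + B_r)⋯) + B₂) + B₁`. -/
def LayeredForm.eval {F : Type*} [Field F] [Fintype F] [DecidableEq F] {n r : ℕ}
    (L : LayeredForm F n r) (x : Fin n → F) : F :=
  nestEval (List.ofFn fun i => (L.M i x, L.B i)) (L.PC x)

/-- The number of state-space transitions changed when the input `s` of `f`
is replaced by the constant `a` (edge deletion when `a = 0`). -/
def chCount {F : Type*} [Fintype F] [DecidableEq F] {n : ℕ}
    (f : (Fin n → F) → F) (s : Fin n) (a : F) : ℕ :=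
  (Finset.univ.filter fun x : Fin n → F => f (Function.update x s a) ≠ f x).card
/-!
A changed transition `x` must satisfy `x_s ∈ S_s` (otherwise `Q̃_{S_s}(x_s) = 1 = Q̃_{S_s}(0)`, so
nothing changes) and `x_v ∉ S_v` for every other variable `v` of the first `ℓ` layers: if
`x_v ∈ S_v` with `v` in layer `i ≤ ℓ`, then `M_i` vanishes both at `x` and at the modified input,
while `M_1, …, M_{i-1}` do not involve `x_s`, so both values equal the same nested expression
truncated at layer `i`. The changed transitions thus lie in a box whose size is the bound.
-/

open Function

theorem nestEval_congr_of_getElem?_eq_zero {R : Type*} [MulZeroClass R] [Add R] (k : ℕ) :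
    ∀ (l₁ l₂ : List (R × R)) (b P₁ P₂ : R), (∀ j < k, l₁[j]? = l₂[j]?) →
      l₁[k]? = some (0, b) → l₂[k]? = some (0, b) → nestEval l₁ P₁ = nestEval l₂ P₂ := by
  induction k with
  | zero =>
    rintro (_ | ⟨⟨m₁, b₁⟩, t₁⟩) (_ | ⟨⟨m₂, b₂⟩, t₂⟩) b P₁ P₂ - h₁ h₂ <;> simp_all [nestEval]
  | succ k ih =>
    rintro (_ | ⟨⟨m₁, b₁⟩, t₁⟩) (_ | ⟨⟨m₂, b₂⟩, t₂⟩) b P₁ P₂ hpre h₁ h₂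
    · simp at h₁
    · simp at h₁
    · simp at h₂
    obtain ⟨rfl, rfl⟩ : m₁ = m₂ ∧ b₁ = b₂ := by simpa using hpre 0 k.succ_pos
    have htail : nestEval t₁ P₁ = nestEval t₂ P₂ :=
      ih t₁ t₂ b P₁ P₂ (fun j hj => by simpa using hpre (j + 1) (by omega))
        (by simpa using h₁) (by simpa using h₂)
    simp only [nestEval, htail]

section Box

variable {ι F : Type*} [Fintype ι] [DecidableEq ι] [Fintype F] [DecidableEq F]

def sensitiveBox (S : ι → Finset F) (D : Finset ι) (s : ι) (v : ι) : Finset F :=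
  if v = s then S s else if v ∈ D then (S v)ᶜ else univ

theorem card_piFinset_sensitiveBox (S : ι → Finset F) {D : Finset ι} {s : ι} (hs : s ∈ D) :
    #(Fintype.piFinset (sensitiveBox S D s)) =
      Fintype.card F ^ (Fintype.card ι - #D) * (∏ v ∈ D.erase s, (Fintype.card F - #(S v))) *
        #(S s) := by
  have hout : ∏ v ∈ Dᶜ, #(sensitiveBox S D s v) = Fintype.card F ^ (Fintype.card ι - #D) := by
    rw [prod_congr rfl fun v hv => ?_, prod_const, card_compl]
    have hvD : v ∉ D := mem_compl.mp hv
    simp [sensitiveBox, hvD, show v ≠ s by rintro rfl; exact hvD hs]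
  have hin : ∏ v ∈ D.erase s, #(sensitiveBox S D s v) = ∏ v ∈ D.erase s, (Fintype.card F - #(S v)) :=
    prod_congr rfl fun v hv => by
      simp [sensitiveBox, ne_of_mem_erase hv, mem_of_mem_erase hv, card_compl]
  rw [Fintype.card_piFinset, ← prod_mul_prod_compl D, ← insert_erase hs,
    prod_insert (notMem_erase s D), insert_erase hs, hout, hin]
  simp only [sensitiveBox, if_true]
  ring

end Box

namespace LayeredForm

variable {F : Type*} [Field F] [Fintype F] [DecidableEq F] {n r : ℕ} (L : LayeredForm F n r)

def upTo (ℓ : Fin r) : Finset (Fin n) :=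
  (univ.filter (· ≤ ℓ)).biUnion L.layer

theorem mem_upTo {ℓ : Fin r} {v : Fin n} : v ∈ L.upTo ℓ ↔ ∃ i ≤ ℓ, v ∈ L.layer i := by
  simp [upTo]

theorem card_upTo (ℓ : Fin r) : #(L.upTo ℓ) = ∑ i ∈ univ.filter (· ≤ ℓ), #(L.layer i) :=
  card_biUnion fun i _ j _ hij => L.disj i j hij

theorem notMem_layer_of_ne {i ℓ : Fin r} {s : Fin n} (hs : s ∈ L.layer ℓ) (hi : i ≠ ℓ) :
    s ∉ L.layer i :=
  fun h => disjoint_left.mp (L.disj i ℓ hi) h hs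

theorem prod_upTo_erase {M : Type*} [CommMonoid M] {ℓ : Fin r} {s : Fin n} (hs : s ∈ L.layer ℓ)
    (g : Fin n → M) :
    ∏ v ∈ (L.upTo ℓ).erase s, g v =
      (∏ i ∈ univ.filter (· < ℓ), ∏ v ∈ L.layer i, g v) * ∏ v ∈ (L.layer ℓ).erase s, g v := by
  have hdisj : Disjoint ((univ.filter (· < ℓ)).biUnion L.layer) ((L.layer ℓ).erase s) :=
    (disjoint_biUnion_left _ _ _).mpr fun i hi =>
      (L.disj i ℓ (mem_filter.mp hi).2.ne).mono_right (erase_subset s _)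
  have hs' : s ∉ (univ.filter (· < ℓ)).biUnion L.layer := by
    simp only [mem_biUnion, mem_filter, mem_univ, true_and, not_exists, not_and]
    exact fun i hi => L.notMem_layer_of_ne hs hi.ne
  rw [upTo, filter_ge_eq_Iic, ← Iio_insert, ← filter_gt_eq_Iio, biUnion_insert, erase_union_distrib,
    erase_eq_of_notMem hs', union_comm, prod_union hdisj,
    prod_biUnion fun i _ j _ hij => L.disj i j hij]

theorem PC_update {ℓ : Fin r} {s : Fin n} (hs : s ∈ L.layer ℓ) (x : Fin n → F) (a : F) :
    L.PC (update x s a) = L.PC x :=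
  not_not.mp fun h => L.PCvars ℓ s hs ⟨_, x, fun _ hj => update_of_ne hj _ _, h⟩

theorem M_update_of_notMem {i : Fin r} {s : Fin n} (hs : s ∉ L.layer i) (x : Fin n → F) (a : F) :
    L.M i (update x s a) = L.M i x :=
  prod_congr rfl fun v hv => by rw [update_of_ne (ne_of_mem_of_not_mem hv hs)]

theorem M_update_of_mem_iff (i : Fin r) {s : Fin n} {x : Fin n → F} {a : F}
    (ha : a ∈ L.S s ↔ x s ∈ L.S s) : L.M i (update x s a) = L.M i x := by
  refine prod_congr rfl fun v _ => ?_
  rcases eq_or_ne v s with rfl | hvs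
  · simp only [Qt, update_self, ha]
  · rw [update_of_ne hvs]

theorem M_eq_zero {i : Fin r} {v : Fin n} (hv : v ∈ L.layer i) {x : Fin n → F}
    (hx : x v ∈ L.S v) : L.M i x = 0 :=
  prod_eq_zero hv (by simp [Qt, hx])

theorem eval_update_of_mem_iff {ℓ : Fin r} {s : Fin n} (hs : s ∈ L.layer ℓ) {x : Fin n → F}
    {a : F} (ha : a ∈ L.S s ↔ x s ∈ L.S s) : L.eval (update x s a) = L.eval x := by
  simp only [eval, L.M_update_of_mem_iff _ ha, L.PC_update hs]

theorem eval_update_of_mem_S {ℓ i : Fin r} {s v : Fin n} (hs : s ∈ L.layer ℓ) (hi : i ≤ ℓ)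
    (hv : v ∈ L.layer i) (hvs : v ≠ s) {x : Fin n → F} (hx : x v ∈ L.S v) (a : F) :
    L.eval (update x s a) = L.eval x := by
  refine nestEval_congr_of_getElem?_eq_zero i.val _ _ (L.B i) _ _ (fun j hj => ?_) ?_ ?_
  · have hjℓ : (⟨j, hj.trans i.isLt⟩ : Fin r) ≠ ℓ := (Fin.lt_def.mpr hj).trans_le hi |>.ne
    simp only [List.getElem?_ofFn, hj.trans i.isLt, dif_pos,
      L.M_update_of_notMem (L.notMem_layer_of_ne hs hjℓ)]
  · simp only [List.getElem?_ofFn, i.isLt, dif_pos,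
      L.M_eq_zero hv (x := update x s a) (by rwa [update_of_ne hvs])]
  · simp only [List.getElem?_ofFn, i.isLt, dif_pos, L.M_eq_zero hv hx]

theorem filter_eval_update_ne_subset {ℓ : Fin r} {s : Fin n} (hs : s ∈ L.layer ℓ)
    (h0 : (0 : F) ∉ L.S s) :
    univ.filter (fun x => L.eval (update x s 0) ≠ L.eval x) ⊆
      Fintype.piFinset (sensitiveBox L.S (L.upTo ℓ) s) := by
  intro x hx
  rw [Fintype.mem_piFinset]
  intro v
  by_contra hv
  refine (mem_filter.mp hx).2 ?_
  unfold sensitiveBox at hv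
  split_ifs at hv with hvs hvD
  · subst hvs
    exact L.eval_update_of_mem_iff hs (iff_of_false h0 hv)
  · obtain ⟨i, hi, hvi⟩ := L.mem_upTo.mp hvD
    exact L.eval_update_of_mem_S hs hi hvi hvs (by simpa using hv) 0
  · exact absurd (mem_univ _) hv

end LayeredForm

/-- General edge-deletion bound for a variable `s` in the `ℓ`-th layer
whose canalizing input set does not contain `0`. -/
theorem stmt6 {F : Type*} [Field F] [Fintype F] [DecidableEq F] {n r : ℕ}
    (f : (Fin n → F) → F) (L : LayeredForm F n r) (hf : f = L.eval)
    (ℓ : Fin r) (s : Fin n) (hs : s ∈ L.layer ℓ) (h0 : (0 : F) ∉ L.S s) :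
    chCount f s 0 ≤
      Fintype.card F ^ (n - ∑ i ∈ Finset.univ.filter (fun i : Fin r => i ≤ ℓ), (L.layer i).card) *
        (∏ i ∈ Finset.univ.filter (fun i : Fin r => i < ℓ),
          ∏ v ∈ L.layer i, (Fintype.card F - (L.S v).card)) *
        (∏ v ∈ (L.layer ℓ).erase s, (Fintype.card F - (L.S v).card)) *
        (L.S s).card := by
  subst hf
  calc chCount L.eval s 0 ≤ #(Fintype.piFinset (sensitiveBox L.S (L.upTo ℓ) s)) :=
        card_le_card (L.filter_eval_update_ne_subset hs h0)
    _ = _ := by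
      rw [card_piFinset_sensitiveBox _ (L.mem_upTo.mpr ⟨ℓ, le_rfl, hs⟩), Fintype.card_fin,
        L.card_upTo, L.prod_upTo_erase hs]
      ring
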